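/- For each i ∈ I let ω_i > 0 and {f_{i,j}}_{j∈J_i} be a frame for its closed span W_i with bounds A_i, B_i, where 0 < inf A_i and sup B_i < ∞. Then the combined family {ω_i f_{i,j}}_{i∈I, j∈J_i} is a frame for H if and only if {(W_i, ω_i)} is a fusion frame for H. -/

import Mathlib

open scoped InnerProductSpace

/-- Orthogonal projection onto a complete subspace, as an operator `H →L H`. -/
noncomputable def fusionProj {H : Type*} [NormedAddCommGroup H] [InnerProductSpace ℂ H]
    (K : Submodule ℂ H) [CompleteSpace K] : H →L[ℂ] H :=
  K.subtypeL.comp (Submodule.orthogonalProjection K)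

/-!
Both conditions bound a quadratic form by `‖x‖²` from both sides, so it suffices to compare the
two forms. Since `f i j ∈ W i`, we have `⟪f i j, x⟫ = ⟪f i j, π_{W i} x⟫`, and the local frame
inequalities applied to `π_{W i} x` give
`A₀ ω_i² ‖π_{W i} x‖² ≤ ∑_j ‖⟪ω_i f i j, x⟫‖² ≤ B₀ ω_i² ‖π_{W i} x‖²`.
All terms are nonnegative, so these fibrewise bounds survive summation over `i`, including the
transfer of summability. The upper constant is taken to be `max A₀ B₀` because `A₀ ≤ B₀` is only
known when `ι` is nonempty.
-/

section FrameBounds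

variable {E : Type*} [NormedAddCommGroup E]

def HasFrameBounds (S : E → ℝ) : Prop :=
  ∃ C D : ℝ, 0 < C ∧ C ≤ D ∧ ∀ x, C * ‖x‖ ^ 2 ≤ S x ∧ S x ≤ D * ‖x‖ ^ 2

theorem HasFrameBounds.of_le_of_le {S T : E → ℝ} {a b : ℝ} (ha : 0 < a) (hab : a ≤ b)
    (hST : ∀ x, a * T x ≤ S x ∧ S x ≤ b * T x) (hT : HasFrameBounds T) :
    HasFrameBounds S := by
  obtain ⟨C, D, hC, hCD, hTx⟩ := hT
  refine ⟨a * C, b * D, by positivity, by gcongr; linarith, fun x => ⟨?_, ?_⟩⟩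
  · calc a * C * ‖x‖ ^ 2 = a * (C * ‖x‖ ^ 2) := mul_assoc _ _ _
      _ ≤ a * T x := mul_le_mul_of_nonneg_left (hTx x).1 ha.le
      _ ≤ S x := (hST x).1
  · calc S x ≤ b * T x := (hST x).2
      _ ≤ b * (D * ‖x‖ ^ 2) := mul_le_mul_of_nonneg_left (hTx x).2 (by linarith)
      _ = b * D * ‖x‖ ^ 2 := (mul_assoc _ _ _).symm

theorem hasFrameBounds_iff_of_le_of_le {S T : E → ℝ} {a b : ℝ} (ha : 0 < a) (hab : a ≤ b)
    (hST : ∀ x, a * T x ≤ S x ∧ S x ≤ b * T x) :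
    HasFrameBounds S ↔ HasFrameBounds T := by
  have hb : 0 < b := ha.trans_le hab
  refine ⟨HasFrameBounds.of_le_of_le (inv_pos.2 hb) (inv_anti₀ ha hab) fun x => ⟨?_, ?_⟩,
    HasFrameBounds.of_le_of_le ha hab hST⟩
  · rw [inv_mul_le_iff₀ hb]; exact (hST x).2
  · rw [le_inv_mul_iff₀ ha]; exact (hST x).1

end FrameBounds

section Sums

variable {ι : Type*}

theorem tsum_le_tsum_and_of_le_of_le {g b : ι → ℝ} {c d : ℝ} (hc : 0 < c) (hb : ∀ i, 0 ≤ b i)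
    (hgb : ∀ i, c * b i ≤ g i ∧ g i ≤ d * b i) :
    c * ∑' i, b i ≤ ∑' i, g i ∧ ∑' i, g i ≤ d * ∑' i, b i := by
  by_cases hbs : Summable b
  · have hgs : Summable g := (hbs.mul_left d).of_nonneg_of_le
      (fun i => (mul_nonneg hc.le (hb i)).trans (hgb i).1) fun i => (hgb i).2
    rw [← tsum_mul_left, ← tsum_mul_left]
    exact ⟨(hbs.mul_left c).tsum_le_tsum (fun i => (hgb i).1) hgs,
      hgs.tsum_le_tsum (fun i => (hgb i).2) (hbs.mul_left d)⟩
  · have hgs : ¬Summable g := fun hgs => hbs <| (hgs.div_const c).of_nonneg_of_le hb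
      fun i => by rw [le_div_iff₀ hc, mul_comm]; exact (hgb i).1
    simp [tsum_eq_zero_of_not_summable hbs, tsum_eq_zero_of_not_summable hgs]

theorem tsum_sigma_of_nonneg {J : ι → Type*} {a : (Σ i, J i) → ℝ} (ha : ∀ p, 0 ≤ a p)
    (hfib : ∀ i, Summable fun j => a ⟨i, j⟩) :
    ∑' p, a p = ∑' i, ∑' j, a ⟨i, j⟩ := by
  by_cases has : Summable a
  · exact has.tsum_sigma
  · have : ¬Summable fun i => ∑' j, a ⟨i, j⟩ := fun h => has <|
      (summable_sigma_of_nonneg ha).2 ⟨hfib, h⟩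
    rw [tsum_eq_zero_of_not_summable has, tsum_eq_zero_of_not_summable this]

end Sums

section Hilbert

variable {H : Type*} [NormedAddCommGroup H] [InnerProductSpace ℂ H]

theorem fusionProj_mem (K : Submodule ℂ H) [CompleteSpace K] (x : H) : fusionProj K x ∈ K :=
  (K.orthogonalProjectionOnto x).2

theorem inner_fusionProj_of_mem {K : Submodule ℂ H} [CompleteSpace K] {v : H} (hv : v ∈ K)
    (x : H) : ⟪v, fusionProj K x⟫_ℂ = ⟪v, x⟫_ℂ :=
  K.inner_orthogonalProjectionOnto_eq_of_mem_left ⟨v, hv⟩ x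

theorem norm_inner_real_smul_left_sq (r : ℝ) (v x : H) :
    ‖⟪r • v, x⟫_ℂ‖ ^ 2 = r ^ 2 * ‖⟪v, x⟫_ℂ‖ ^ 2 := by
  rw [RCLike.real_smul_eq_coe_smul (K := ℂ), inner_smul_real_left, norm_smul, mul_pow,
    Real.norm_eq_abs, sq_abs]

theorem summable_norm_inner_sq_of_le_tsum {J : Type*} (v : J → H) {a : ℝ} (ha : 0 < a) {g : H}
    (hg : a * ‖g‖ ^ 2 ≤ ∑' j, ‖⟪v j, g⟫_ℂ‖ ^ 2) : Summable fun j => ‖⟪v j, g⟫_ℂ‖ ^ 2 := by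
  rcases eq_or_ne g 0 with rfl | hg0
  · simp
  · by_contra hns
    rw [tsum_eq_zero_of_not_summable hns] at hg
    have : 0 < a * ‖g‖ ^ 2 := by positivity
    linarith

theorem summable_and_tsum_norm_inner_smul_sq {J : Type*} {K : Submodule ℂ H} [CompleteSpace K]
    {v : J → H} (hv : ∀ j, v j ∈ K) {a : ℝ} (ha : 0 < a)
    (hframe : ∀ g ∈ K, a * ‖g‖ ^ 2 ≤ ∑' j, ‖⟪v j, g⟫_ℂ‖ ^ 2) (r : ℝ) (x : H) :
    Summable (fun j => ‖⟪r • v j, x⟫_ℂ‖ ^ 2) ∧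
      ∑' j, ‖⟪r • v j, x⟫_ℂ‖ ^ 2 = r ^ 2 * ∑' j, ‖⟪v j, fusionProj K x⟫_ℂ‖ ^ 2 := by
  have hterm : ∀ j, ‖⟪r • v j, x⟫_ℂ‖ ^ 2 = r ^ 2 * ‖⟪v j, fusionProj K x⟫_ℂ‖ ^ 2 := fun j => by
    rw [norm_inner_real_smul_left_sq, inner_fusionProj_of_mem (hv j)]
  simp_rw [hterm]
  exact ⟨(summable_norm_inner_sq_of_le_tsum v ha
    (hframe _ (fusionProj_mem K x))).mul_left _, tsum_mul_left⟩

end Hilbert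

theorem combined_frame_iff_fusion_frame_general
    {H : Type*} [NormedAddCommGroup H] [InnerProductSpace ℂ H]
    {ι : Type*} {J : ι → Type*} (f : ∀ i, J i → H)
    (ω : ι → ℝ)
    (W : ι → Submodule ℂ H) [∀ i, CompleteSpace (W i)]
    (hW : ∀ i, W i = (Submodule.span ℂ (Set.range (f i))).topologicalClosure)
    (A B : ι → ℝ)
    (hlocal : ∀ i, ∀ g ∈ W i,
      A i * ‖g‖ ^ 2 ≤ ∑' j, ‖⟪f i j, g⟫_ℂ‖ ^ 2 ∧ ∑' j, ‖⟪f i j, g⟫_ℂ‖ ^ 2 ≤ B i * ‖g‖ ^ 2)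
    (A₀ B₀ : ℝ) (hA₀ : 0 < A₀) (hA₀le : ∀ i, A₀ ≤ A i) (hB₀ : ∀ i, B i ≤ B₀) :
    (∃ C D : ℝ, 0 < C ∧ C ≤ D ∧ ∀ x : H,
        C * ‖x‖ ^ 2 ≤ ∑' p : Σ i, J i, ‖⟪ω p.1 • f p.1 p.2, x⟫_ℂ‖ ^ 2 ∧
          ∑' p : Σ i, J i, ‖⟪ω p.1 • f p.1 p.2, x⟫_ℂ‖ ^ 2 ≤ D * ‖x‖ ^ 2) ↔
      (∃ C D : ℝ, 0 < C ∧ C ≤ D ∧ ∀ x : H,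
        C * ‖x‖ ^ 2 ≤ ∑' i, (ω i) ^ 2 * ‖fusionProj (W i) x‖ ^ 2 ∧
          ∑' i, (ω i) ^ 2 * ‖fusionProj (W i) x‖ ^ 2 ≤ D * ‖x‖ ^ 2) := by
  have hmem : ∀ i j, f i j ∈ W i := fun i j => hW i ▸
    Submodule.le_topologicalClosure _ (Submodule.subset_span ⟨j, rfl⟩)
  have hframe : ∀ i, ∀ g ∈ W i, A₀ * ‖g‖ ^ 2 ≤ ∑' j, ‖⟪f i j, g⟫_ℂ‖ ^ 2 ∧
      ∑' j, ‖⟪f i j, g⟫_ℂ‖ ^ 2 ≤ max A₀ B₀ * ‖g‖ ^ 2 := fun i g hg =>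
    ⟨le_trans (by gcongr; exact hA₀le i) (hlocal i g hg).1,
      (hlocal i g hg).2.trans (by gcongr; exact (hB₀ i).trans (le_max_right _ _))⟩
  have hfibre x i := summable_and_tsum_norm_inner_smul_sq (hmem i) hA₀
    (fun g hg => (hframe i g hg).1) (ω i) x
  have hcompare : ∀ x, A₀ * ∑' i, ω i ^ 2 * ‖fusionProj (W i) x‖ ^ 2 ≤
        ∑' p : Σ i, J i, ‖⟪ω p.1 • f p.1 p.2, x⟫_ℂ‖ ^ 2 ∧
      ∑' p : Σ i, J i, ‖⟪ω p.1 • f p.1 p.2, x⟫_ℂ‖ ^ 2 ≤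
        max A₀ B₀ * ∑' i, ω i ^ 2 * ‖fusionProj (W i) x‖ ^ 2 := by
    intro x
    rw [tsum_sigma_of_nonneg (fun _ => by positivity) ?_]
    · refine tsum_le_tsum_and_of_le_of_le hA₀ (fun _ => by positivity) fun i => ?_
      obtain ⟨hlo, hhi⟩ := hframe i _ (fusionProj_mem (W i) x)
      rw [(hfibre x i).2, mul_left_comm A₀, mul_left_comm (max A₀ B₀)]
      exact ⟨by gcongr, by gcongr⟩
    · exact fun i => (hfibre x i).1
  -- Elaborated without the expected type: unifying with the unfolded goal first times out.
  exact (hasFrameBounds_iff_of_le_of_le hA₀ (le_max_left A₀ B₀) hcompare :)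

/-- For each `i` let `ω i > 0` and `{f i j}` be a frame for its closed span `W i` with
bounds `A i, B i`, where `0 < inf A i` and `sup B i < ∞`. Then `{ω i • f i j}` is a
frame for `H` if and only if `{(W i, ω i)}` is a fusion frame for `H`. -/
theorem combined_frame_iff_fusion_frame
    {H : Type*} [NormedAddCommGroup H] [InnerProductSpace ℂ H] [CompleteSpace H]
    {ι : Type*} {J : ι → Type*} (f : ∀ i, J i → H)
    (ω : ι → ℝ) (hω : ∀ i, 0 < ω i)
    (W : ι → Submodule ℂ H) [∀ i, CompleteSpace (W i)]
    (hW : ∀ i, W i = (Submodule.span ℂ (Set.range (f i))).topologicalClosure)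
    (A B : ι → ℝ) (hAB : ∀ i, A i ≤ B i)
    (hlocal : ∀ i, ∀ g ∈ W i,
      A i * ‖g‖ ^ 2 ≤ ∑' j, ‖⟪f i j, g⟫_ℂ‖ ^ 2 ∧ ∑' j, ‖⟪f i j, g⟫_ℂ‖ ^ 2 ≤ B i * ‖g‖ ^ 2)
    (A₀ B₀ : ℝ) (hA₀ : 0 < A₀) (hA₀le : ∀ i, A₀ ≤ A i) (hB₀ : ∀ i, B i ≤ B₀) :
    (∃ C D : ℝ, 0 < C ∧ C ≤ D ∧ ∀ x : H,
        C * ‖x‖ ^ 2 ≤ ∑' p : Σ i, J i, ‖⟪ω p.1 • f p.1 p.2, x⟫_ℂ‖ ^ 2 ∧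
          ∑' p : Σ i, J i, ‖⟪ω p.1 • f p.1 p.2, x⟫_ℂ‖ ^ 2 ≤ D * ‖x‖ ^ 2) ↔
      (∃ C D : ℝ, 0 < C ∧ C ≤ D ∧ ∀ x : H,
        C * ‖x‖ ^ 2 ≤ ∑' i, (ω i) ^ 2 * ‖fusionProj (W i) x‖ ^ 2 ∧
          ∑' i, (ω i) ^ 2 * ‖fusionProj (W i) x‖ ^ 2 ≤ D * ‖x‖ ^ 2) :=
  combined_frame_iff_fusion_frame_general f ω W hW A B hlocal A₀ B₀ hA₀ hA₀le hB₀
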